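/- arXiv:2007.03950 — 8 statements merged into one kernel-verified Lean document; each statement's English description precedes it below -/
import Mathlib

section
/- Let μ ≥ 0 be a real number. If a nonempty edge set X* ⊆ E maximizes the DSS objective O_μ(X) = S(X) + μ·D(X) over all nonempty subsets X ⊆ E, then X* also maximizes the DSS-INV objective O_λ(X) = S(X) − λ/D(X) over all nonempty subsets X ⊆ E, where λ = μ·D(X*)². -/
open Finset

/-- The set of vertices incident to some edge of `X`. -/
noncomputable def vertsOf {V : Type*} [Fintype V] (X : Finset (Sym2 V)) : Finset V :=
  @Finset.filter V (fun v => ∃ e ∈ X, v ∈ e) (Classical.decPred _) Finset.univ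

/-- The density `D(X) = |X| / |V(X)|` of the subgraph induced by the edge set `X`. -/
noncomputable def edens {V : Type*} [Fintype V] (X : Finset (Sym2 V)) : ℝ :=
  (X.card : ℝ) / ((vertsOf X).card : ℝ)

/-- The sum of `s` over all unordered pairs of distinct edges of `X`
(for symmetric `s`, this is half of the sum over ordered pairs of distinct edges). -/
noncomputable def pairSum {V : Type*} [DecidableEq V]
    (s : Sym2 V → Sym2 V → ℝ) (X : Finset (Sym2 V)) : ℝ :=
  (∑ p ∈ X.offDiag, s p.1 p.2) / 2

/-- The subgraph edge similarity `S(X)`. -/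
noncomputable def esim {V : Type*} [Fintype V] [DecidableEq V]
    (s : Sym2 V → Sym2 V → ℝ) (X : Finset (Sym2 V)) : ℝ :=
  pairSum s X / (X.card : ℝ)

theorem edens_pos' {V : Type*} [Fintype V] (X : Finset (Sym2 V)) (hX : X.Nonempty) :
    0 < edens X := by
  obtain ⟨e, he⟩ := hX
  induction e using Sym2.ind with
  | _ a b =>
    have hv : a ∈ vertsOf X := by
      simp only [vertsOf, Finset.mem_filter, Finset.mem_univ, true_and]
      exact ⟨s(a, b), he, by simp⟩
    have h1 : 0 < (vertsOf X).card := Finset.card_pos.mpr ⟨a, hv⟩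
    have h2 : 0 < X.card := Finset.card_pos.mpr ⟨s(a, b), he⟩
    exact div_pos (by exact_mod_cast h2) (by exact_mod_cast h1)

/-- If a nonempty `X* ⊆ E` maximizes the DSS objective `S(X) + μ·D(X)` over nonempty
subsets of `E`, then it maximizes the DSS-INV objective `S(X) − λ/D(X)` with
`λ = μ·D(X*)²`. -/
theorem dss_maximizer_is_dssInv_maximizer {V : Type*} [Fintype V] [DecidableEq V]
    (E : Finset (Sym2 V)) (hE : ∀ e ∈ E, ¬ e.IsDiag)
    (s : Sym2 V → Sym2 V → ℝ)
    (hs_symm : ∀ e d, s e d = s d e) (hs_nonneg : ∀ e d, 0 ≤ s e d)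
    (μ : ℝ) (hμ : 0 ≤ μ)
    (Xstar : Finset (Sym2 V)) (hXstar : Xstar ⊆ E) (hXstar_ne : Xstar.Nonempty)
    (hmax : ∀ X : Finset (Sym2 V), X ⊆ E → X.Nonempty →
      esim s X + μ * edens X ≤ esim s Xstar + μ * edens Xstar) :
    ∀ X : Finset (Sym2 V), X ⊆ E → X.Nonempty →
      esim s X - μ * edens Xstar ^ 2 / edens X ≤
        esim s Xstar - μ * edens Xstar ^ 2 / edens Xstar := by
  intro X hXE hXne
  have hD : 0 < edens X := edens_pos' X hXne
  have hDs : 0 < edens Xstar := edens_pos' Xstar hXstar_ne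
  have h := hmax X hXE hXne
  rw [← sub_nonneg]
  have key : esim s Xstar - μ * edens Xstar ^ 2 / edens Xstar -
      (esim s X - μ * edens Xstar ^ 2 / edens X) =
      (esim s Xstar + μ * edens Xstar - (esim s X + μ * edens X)) +
      μ * (edens Xstar - edens X) ^ 2 / edens X := by
    field_simp
    ring
  rw [key]
  have h2 : 0 ≤ μ * (edens Xstar - edens X) ^ 2 / edens X :=
    div_nonneg (mul_nonneg hμ (sq_nonneg _)) hD.le
  linarith
end

section
/- Let c ∈ ℝ and suppose X* ⊆ α maximizes Q(X | c) = F1(X) − c·F2(X) over all finite subsets X of α, with optimal value Q(X* | c) = 0. Then F1(X*)/F2(X*) = c and X* maximizes the ratio c(X) = F1(X)/F2(X) over all subsets X of α. -/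
/-- If `X*` maximizes `Q(X | c) = F1(X) − c·F2(X)` over all finite subsets of `α` with
optimal value `0`, then `F1(X*)/F2(X*) = c` and `X*` maximizes the ratio `F1(X)/F2(X)`. -/
theorem q_zero_maximizer_gives_fp {α : Type*} [Fintype α]
    (F1 F2 : Finset α → ℝ) (hF2 : ∀ X : Finset α, 0 < F2 X) (c : ℝ)
    (Xstar : Finset α)
    (hmax : ∀ X : Finset α, F1 X - c * F2 X ≤ F1 Xstar - c * F2 Xstar)
    (hzero : F1 Xstar - c * F2 Xstar = 0) :
    F1 Xstar / F2 Xstar = c ∧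
      ∀ X : Finset α, F1 X / F2 X ≤ F1 Xstar / F2 Xstar := by
  have hc : F1 Xstar / F2 Xstar = c := by
    rw [div_eq_iff (hF2 Xstar).ne']
    linarith [hzero]
  refine ⟨hc, fun X => ?_⟩
  rw [hc, div_le_iff₀ (hF2 X)]
  have := hmax X
  nlinarith [hF2 X]
end

section
/- The subgraph edge similarity of the optimal edge set of DSS-INV is a monotonically non-increasing function of λ: if 0 ≤ λ₁ < λ₂ and X₁, X₂ are nonempty subsets of E maximizing O_{λ₁} and O_{λ₂} respectively over all nonempty subsets of E, then S(X₁) ≥ S(X₂). -/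
open Finset

/-- The subgraph edge similarity of the optimal edge set of DSS-INV is non-increasing in
`λ`: for `0 ≤ λ₁ < λ₂` and respective maximizers `X₁`, `X₂`, we have `S(X₁) ≥ S(X₂)`. -/
theorem dssInv_optimal_similarity_monotone {V : Type*} [Fintype V] [DecidableEq V]
    (E : Finset (Sym2 V)) (hE : ∀ e ∈ E, ¬ e.IsDiag)
    (s : Sym2 V → Sym2 V → ℝ)
    (hs_symm : ∀ e d, s e d = s d e) (hs_nonneg : ∀ e d, 0 ≤ s e d)
    (lam1 lam2 : ℝ) (hlam1 : 0 ≤ lam1) (hlam12 : lam1 < lam2)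
    (X1 X2 : Finset (Sym2 V)) (hX1 : X1 ⊆ E) (hX1ne : X1.Nonempty)
    (hX2 : X2 ⊆ E) (hX2ne : X2.Nonempty)
    (hmaxX1 : ∀ X : Finset (Sym2 V), X ⊆ E → X.Nonempty →
      esim s X - lam1 / edens X ≤ esim s X1 - lam1 / edens X1)
    (hmaxX2 : ∀ X : Finset (Sym2 V), X ⊆ E → X.Nonempty →
      esim s X - lam2 / edens X ≤ esim s X2 - lam2 / edens X2) :
    esim s X2 ≤ esim s X1 := by
  have h1 := hmaxX1 X2 hX2 hX2ne
  have h2 := hmaxX2 X1 hX1 hX1ne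
  simp only [div_eq_mul_inv] at h1 h2
  set u := (edens X1)⁻¹
  set v := (edens X2)⁻¹
  have hv : v ≤ u := by
    have := add_le_add h1 h2
    nlinarith
  nlinarith [mul_le_mul_of_nonneg_left hv hlam1]
end

section
/- If 0 < λ₁ < λ₂ and X₁, X₂ are nonempty subsets of E maximizing O_{λ₁} and O_{λ₂} respectively over all nonempty subsets of E, then exactly one of the following holds: either S(X₁) = S(X₂) and D(X₁) = D(X₂), or S(X₁) > S(X₂) and D(X₁) < D(X₂). -/
open Finset

/-- For `0 < λ₁ < λ₂` and respective maximizers `X₁`, `X₂` of DSS-INV, exactly one of the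
following holds: either `S(X₁) = S(X₂)` and `D(X₁) = D(X₂)`, or `S(X₁) > S(X₂)` and
`D(X₁) < D(X₂)`. -/
theorem dssInv_solutions_dichotomy {V : Type*} [Fintype V] [DecidableEq V]
    (E : Finset (Sym2 V)) (hE : ∀ e ∈ E, ¬ e.IsDiag)
    (s : Sym2 V → Sym2 V → ℝ)
    (hs_symm : ∀ e d, s e d = s d e) (hs_nonneg : ∀ e d, 0 ≤ s e d)
    (lam1 lam2 : ℝ) (hlam1 : 0 < lam1) (hlam12 : lam1 < lam2)
    (X1 X2 : Finset (Sym2 V)) (hX1 : X1 ⊆ E) (hX1ne : X1.Nonempty)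
    (hX2 : X2 ⊆ E) (hX2ne : X2.Nonempty)
    (hmaxX1 : ∀ X : Finset (Sym2 V), X ⊆ E → X.Nonempty →
      esim s X - lam1 / edens X ≤ esim s X1 - lam1 / edens X1)
    (hmaxX2 : ∀ X : Finset (Sym2 V), X ⊆ E → X.Nonempty →
      esim s X - lam2 / edens X ≤ esim s X2 - lam2 / edens X2) :
    Xor' (esim s X1 = esim s X2 ∧ edens X1 = edens X2)
      (esim s X2 < esim s X1 ∧ edens X1 < edens X2) := by
  have hpos : ∀ X : Finset (Sym2 V), X.Nonempty → 0 < edens X := by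
    intro X hne
    obtain ⟨e, he⟩ := hne
    induction e using Sym2.ind with
    | _ a b =>
      have hv : a ∈ vertsOf X := by
        simp only [vertsOf, Finset.mem_filter, Finset.mem_univ, true_and]
        exact ⟨_, he, Sym2.mem_mk_left a b⟩
      have h1 : (0 : ℝ) < (X.card : ℝ) := by
        exact_mod_cast Finset.card_pos.mpr ⟨_, he⟩
      have h2 : (0 : ℝ) < ((vertsOf X).card : ℝ) := by
        exact_mod_cast Finset.card_pos.mpr ⟨a, hv⟩
      exact div_pos h1 h2
  have hD1 : 0 < edens X1 := hpos X1 hX1ne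
  have hD2 : 0 < edens X2 := hpos X2 hX2ne
  have h1 := hmaxX1 X2 hX2 hX2ne
  have h2 := hmaxX2 X1 hX1 hX1ne
  set S1 := esim s X1
  set S2 := esim s X2
  set D1 := edens X1
  set D2 := edens X2
  -- adding gives (lam2 - lam1) * (1/D1 - 1/D2) ≥ 0, so D1 ≤ D2
  have hsum : (lam2 - lam1) / D2 ≤ (lam2 - lam1) / D1 := by
    have := add_le_add h1 h2
    have hd : lam2 / D2 - lam1 / D2 ≤ lam2 / D1 - lam1 / D1 := by linarith
    rw [div_sub_div_same] at hd
    rw [div_sub_div_same] at hd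
    exact hd
  have hD12 : D1 ≤ D2 := by
    have hinv : 1 / D2 ≤ 1 / D1 := by
      have hl : 0 < lam2 - lam1 := by linarith
      rw [div_le_div_iff₀ hD2 hD1] at hsum
      rw [div_le_div_iff₀ hD2 hD1]
      nlinarith
    rw [div_le_div_iff₀ hD2 hD1] at hinv
    nlinarith
  rcases eq_or_lt_of_le hD12 with heq | hlt
  · left
    constructor
    · refine ⟨?_, heq⟩
      rw [heq] at h1 h2
      linarith
    · rintro ⟨-, hlt'⟩
      exact absurd heq (ne_of_lt hlt')
  · right
    constructor
    · refine ⟨?_, hlt⟩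
      -- 1/D2 < 1/D1, so S1 - S2 ≥ lam1 * (1/D1 - 1/D2) > 0
      have hinv : lam1 / D2 < lam1 / D1 := by
        rw [div_lt_div_iff₀ hD2 hD1]
        nlinarith
      linarith
    · rintro ⟨-, heq'⟩
      exact absurd heq' (ne_of_lt hlt)
end

section
/- Two-sided λ-granularity bound: if 0 ≤ λ₁ ≤ λ₂ and X₁, X₂ are nonempty subsets of E maximizing O_{λ₁} and O_{λ₂} respectively over all nonempty subsets of E, then λ₁·(1/D(X₁) − 1/D(X₂)) ≤ S(X₁) − S(X₂) ≤ λ₂·(1/D(X₁) − 1/D(X₂)). -/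
open Finset

/-- Two-sided `λ`-granularity bound: for `0 ≤ λ₁ ≤ λ₂` and respective maximizers
`X₁`, `X₂` of DSS-INV,
`λ₁·(1/D(X₁) − 1/D(X₂)) ≤ S(X₁) − S(X₂) ≤ λ₂·(1/D(X₁) − 1/D(X₂))`. -/
theorem dssInv_two_sided_granularity_bound {V : Type*} [Fintype V] [DecidableEq V]
    (E : Finset (Sym2 V)) (hE : ∀ e ∈ E, ¬ e.IsDiag)
    (s : Sym2 V → Sym2 V → ℝ)
    (hs_symm : ∀ e d, s e d = s d e) (hs_nonneg : ∀ e d, 0 ≤ s e d)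
    (lam1 lam2 : ℝ) (hlam1 : 0 ≤ lam1) (hlam12 : lam1 ≤ lam2)
    (X1 X2 : Finset (Sym2 V)) (hX1 : X1 ⊆ E) (hX1ne : X1.Nonempty)
    (hX2 : X2 ⊆ E) (hX2ne : X2.Nonempty)
    (hmaxX1 : ∀ X : Finset (Sym2 V), X ⊆ E → X.Nonempty →
      esim s X - lam1 / edens X ≤ esim s X1 - lam1 / edens X1)
    (hmaxX2 : ∀ X : Finset (Sym2 V), X ⊆ E → X.Nonempty →
      esim s X - lam2 / edens X ≤ esim s X2 - lam2 / edens X2) :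
    lam1 * (1 / edens X1 - 1 / edens X2) ≤ esim s X1 - esim s X2 ∧
      esim s X1 - esim s X2 ≤ lam2 * (1 / edens X1 - 1 / edens X2) := by
  have h1 := hmaxX1 X2 hX2 hX2ne
  have h2 := hmaxX2 X1 hX1 hX1ne
  rw [div_eq_mul_inv, div_eq_mul_inv] at h1 h2
  simp only [one_div, mul_sub]
  constructor <;> linarith
end

section
/- λ-interval pruning: let 0 ≤ λ₁ < λ < λ₂ and let X₁, X, X₂ be nonempty subsets of E maximizing O_{λ₁}, O_λ, O_{λ₂} respectively over all nonempty subsets of E. If S(X₁) = S(X₂) and D(X₁) = D(X₂), then also S(X) = S(X₁) and D(X) = D(X₁). -/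
open Finset

/-- `λ`-interval pruning: for `0 ≤ λ₁ < λ < λ₂` with respective DSS-INV maximizers
`X₁`, `X`, `X₂`, if `S(X₁) = S(X₂)` and `D(X₁) = D(X₂)` then also `S(X) = S(X₁)` and
`D(X) = D(X₁)`. -/
theorem dssInv_lambda_interval_pruning {V : Type*} [Fintype V] [DecidableEq V]
    (E : Finset (Sym2 V)) (hE : ∀ e ∈ E, ¬ e.IsDiag)
    (s : Sym2 V → Sym2 V → ℝ)
    (hs_symm : ∀ e d, s e d = s d e) (hs_nonneg : ∀ e d, 0 ≤ s e d)
    (lam1 lam lam2 : ℝ) (hlam1 : 0 ≤ lam1) (h1 : lam1 < lam) (h2 : lam < lam2)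
    (X1 Xm X2 : Finset (Sym2 V))
    (hX1 : X1 ⊆ E) (hX1ne : X1.Nonempty)
    (hXm : Xm ⊆ E) (hXmne : Xm.Nonempty)
    (hX2 : X2 ⊆ E) (hX2ne : X2.Nonempty)
    (hmaxX1 : ∀ X : Finset (Sym2 V), X ⊆ E → X.Nonempty →
      esim s X - lam1 / edens X ≤ esim s X1 - lam1 / edens X1)
    (hmaxXm : ∀ X : Finset (Sym2 V), X ⊆ E → X.Nonempty →
      esim s X - lam / edens X ≤ esim s Xm - lam / edens Xm)
    (hmaxX2 : ∀ X : Finset (Sym2 V), X ⊆ E → X.Nonempty →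
      esim s X - lam2 / edens X ≤ esim s X2 - lam2 / edens X2)
    (hS : esim s X1 = esim s X2) (hD : edens X1 = edens X2) :
    esim s Xm = esim s X1 ∧ edens Xm = edens X1 := by
  have i1 := hmaxX1 Xm hXm hXmne
  have i2 := hmaxX2 Xm hXm hXmne
  have i3 := hmaxXm X1 hX1 hX1ne
  rw [← hS, ← hD] at i2
  simp only [div_eq_mul_inv] at i1 i2 i3
  have hBle : (edens Xm)⁻¹ ≤ (edens X1)⁻¹ := by nlinarith [i1, i3]
  have hBge : (edens X1)⁻¹ ≤ (edens Xm)⁻¹ := by nlinarith [i2, i3]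
  have hB : (edens Xm)⁻¹ = (edens X1)⁻¹ := le_antisymm hBle hBge
  have hA : esim s Xm = esim s X1 := by
    rw [hB] at i3 i1
    nlinarith [i1, i3]
  exact ⟨hA, inv_injective hB⟩
end

section
/- Small-λ regime yields maximum similarity: suppose there exist nonempty subsets of E with different subgraph edge similarity values, and let δ_S > 0 be the minimum of |S(X) − S(Y)| over all pairs of nonempty subsets X, Y ⊆ E with S(X) ≠ S(Y) (this minimum exists by finiteness). If 0 ≤ λ ≤ δ_S/2, then every nonempty X* ⊆ E maximizing O_λ over nonempty subsets of E satisfies S(X*) = max{S(X) : X ⊆ E nonempty}. -/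
open Finset


lemma vertsOf_card_le {V : Type*} [Fintype V] [DecidableEq V] (X : Finset (Sym2 V)) :
    (vertsOf X).card ≤ 2 * X.card := by
  have hsub : vertsOf X ⊆ X.biUnion (fun e => {e.out.1, e.out.2}) := by
    intro v hv
    simp only [vertsOf, Finset.mem_filter] at hv
    obtain ⟨-, e, he, hve⟩ := hv
    refine Finset.mem_biUnion.2 ⟨e, he, ?_⟩
    have hv2 : v ∈ s(e.out.1, e.out.2) := by
      rw [Sym2.mk, Prod.mk.eta, e.out_eq]; exact hve
    rcases Sym2.mem_iff.1 hv2 with h | h <;> simp [h]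
  calc (vertsOf X).card ≤ (X.biUnion (fun e => {e.out.1, e.out.2})).card := Finset.card_le_card hsub
    _ ≤ ∑ e ∈ X, ({e.out.1, e.out.2} : Finset V).card := Finset.card_biUnion_le
    _ ≤ ∑ e ∈ X, 2 := Finset.sum_le_sum (fun e _ => Finset.card_insert_le _ _ |>.trans (by simp))
    _ = 2 * X.card := by rw [Finset.sum_const, smul_eq_mul, mul_comm]

lemma vertsOf_nonempty {V : Type*} [Fintype V] {X : Finset (Sym2 V)} (hX : X.Nonempty) :
    (vertsOf X).Nonempty := by
  obtain ⟨e, he⟩ := hX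
  exact ⟨e.out.1, by simp [vertsOf]; exact ⟨e, he, e.out_fst_mem⟩⟩


/-- Small-`λ` regime yields maximum similarity: if `δ_S > 0` is the minimum of
`|S(X) − S(Y)|` over pairs of nonempty subsets of `E` with `S(X) ≠ S(Y)` (such pairs
existing), and `0 ≤ λ ≤ δ_S/2`, then every DSS-INV maximizer `X*` attains the maximum
subgraph edge similarity among nonempty subsets of `E`. -/
theorem small_lambda_max_similarity {V : Type*} [Fintype V] [DecidableEq V]
    (E : Finset (Sym2 V)) (hE : ∀ e ∈ E, ¬ e.IsDiag)
    (s : Sym2 V → Sym2 V → ℝ)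
    (hs_symm : ∀ e d, s e d = s d e) (hs_nonneg : ∀ e d, 0 ≤ s e d)
    (hex : ∃ X : Finset (Sym2 V), X ⊆ E ∧ X.Nonempty ∧
      ∃ Y : Finset (Sym2 V), Y ⊆ E ∧ Y.Nonempty ∧ esim s X ≠ esim s Y)
    (deltaS : ℝ) (hdpos : 0 < deltaS)
    (hdlb : ∀ X : Finset (Sym2 V), X ⊆ E → X.Nonempty →
      ∀ Y : Finset (Sym2 V), Y ⊆ E → Y.Nonempty →
      esim s X ≠ esim s Y → deltaS ≤ |esim s X - esim s Y|)
    (hdatt : ∃ X : Finset (Sym2 V), X ⊆ E ∧ X.Nonempty ∧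
      ∃ Y : Finset (Sym2 V), Y ⊆ E ∧ Y.Nonempty ∧
      esim s X ≠ esim s Y ∧ |esim s X - esim s Y| = deltaS)
    (lam : ℝ) (hlam0 : 0 ≤ lam) (hlam : lam ≤ deltaS / 2)
    (Xstar : Finset (Sym2 V)) (hXstar : Xstar ⊆ E) (hXstar_ne : Xstar.Nonempty)
    (hmaxXstar : ∀ X : Finset (Sym2 V), X ⊆ E → X.Nonempty →
      esim s X - lam / edens X ≤ esim s Xstar - lam / edens Xstar) :
    ∀ X : Finset (Sym2 V), X ⊆ E → X.Nonempty → esim s X ≤ esim s Xstar := by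
  intro X hX hXne
  by_contra hcon
  push_neg at hcon
  have hne : esim s X ≠ esim s Xstar := ne_of_gt hcon
  have hdd : deltaS ≤ esim s X - esim s Xstar := by
    have h := hdlb X hX hXne Xstar hXstar hXstar_ne hne
    rwa [abs_of_pos (by linarith)] at h
  have hO := hmaxXstar X hX hXne
  have hXcard : (0:ℝ) < X.card := by exact_mod_cast Finset.card_pos.2 hXne
  have hVX : (0:ℝ) < (vertsOf X).card := by
    exact_mod_cast Finset.card_pos.2 (vertsOf_nonempty hXne)
  have hXscard : (0:ℝ) < Xstar.card := by exact_mod_cast Finset.card_pos.2 hXstar_ne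
  have hVXs : (0:ℝ) < (vertsOf Xstar).card := by
    exact_mod_cast Finset.card_pos.2 (vertsOf_nonempty hXstar_ne)
  have hedXs : 0 < edens Xstar := div_pos hXscard hVXs
  have hbound : lam / edens X ≤ 2 * lam := by
    rw [edens, div_div_eq_mul_div, div_le_iff₀ hXcard]
    have h2 : ((vertsOf X).card : ℝ) ≤ 2 * X.card := by
      exact_mod_cast vertsOf_card_le X
    nlinarith
  rcases eq_or_lt_of_le hlam0 with h0 | hpos
  · rw [← h0] at hO
    simp only [zero_div, sub_zero] at hO
    linarith
  · have hpos2 : 0 < lam / edens Xstar := div_pos hpos hedXs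
    linarith
end

section
/- Large-λ regime yields maximum density: suppose there exist nonempty subsets of E with different densities, and let δ_D > 0 be the minimum of |1/D(X) − 1/D(Y)| over all pairs of nonempty subsets X, Y ⊆ E with D(X) ≠ D(Y) (this minimum exists by finiteness); let Δ_S = max{S(X) : X ⊆ E nonempty} − min{S(X) : X ⊆ E nonempty}. If λ > Δ_S/δ_D, then every nonempty X* ⊆ E maximizing O_λ over nonempty subsets of E satisfies D(X*) = max{D(X) : X ⊆ E nonempty}. -/
open Finset

/-- Large-`λ` regime yields maximum density: if `δ_D > 0` is the minimum of
`|1/D(X) − 1/D(Y)|` over pairs of nonempty subsets of `E` with `D(X) ≠ D(Y)` (such pairs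
existing), `Δ_S = S_max − S_min` is the spread of subgraph edge similarities, and
`λ > Δ_S/δ_D`, then every DSS-INV maximizer `X*` attains the maximum density among
nonempty subsets of `E`. -/
theorem large_lambda_max_density {V : Type*} [Fintype V] [DecidableEq V]
    (E : Finset (Sym2 V)) (hE : ∀ e ∈ E, ¬ e.IsDiag)
    (s : Sym2 V → Sym2 V → ℝ)
    (hs_symm : ∀ e d, s e d = s d e) (hs_nonneg : ∀ e d, 0 ≤ s e d)
    (hex : ∃ X : Finset (Sym2 V), X ⊆ E ∧ X.Nonempty ∧
      ∃ Y : Finset (Sym2 V), Y ⊆ E ∧ Y.Nonempty ∧ edens X ≠ edens Y)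
    (deltaD : ℝ) (hdpos : 0 < deltaD)
    (hdlb : ∀ X : Finset (Sym2 V), X ⊆ E → X.Nonempty →
      ∀ Y : Finset (Sym2 V), Y ⊆ E → Y.Nonempty →
      edens X ≠ edens Y → deltaD ≤ |1 / edens X - 1 / edens Y|)
    (hdatt : ∃ X : Finset (Sym2 V), X ⊆ E ∧ X.Nonempty ∧
      ∃ Y : Finset (Sym2 V), Y ⊆ E ∧ Y.Nonempty ∧
      edens X ≠ edens Y ∧ |1 / edens X - 1 / edens Y| = deltaD)
    (Smax Smin : ℝ)
    (hSmax_ub : ∀ X : Finset (Sym2 V), X ⊆ E → X.Nonempty → esim s X ≤ Smax)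
    (hSmax_att : ∃ X : Finset (Sym2 V), X ⊆ E ∧ X.Nonempty ∧ esim s X = Smax)
    (hSmin_lb : ∀ X : Finset (Sym2 V), X ⊆ E → X.Nonempty → Smin ≤ esim s X)
    (hSmin_att : ∃ X : Finset (Sym2 V), X ⊆ E ∧ X.Nonempty ∧ esim s X = Smin)
    (lam : ℝ) (hlam : (Smax - Smin) / deltaD < lam)
    (Xstar : Finset (Sym2 V)) (hXstar : Xstar ⊆ E) (hXstar_ne : Xstar.Nonempty)
    (hmaxXstar : ∀ X : Finset (Sym2 V), X ⊆ E → X.Nonempty →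
      esim s X - lam / edens X ≤ esim s Xstar - lam / edens Xstar) :
    ∀ X : Finset (Sym2 V), X ⊆ E → X.Nonempty → edens X ≤ edens Xstar := by
  intro X hXE hXne
  by_contra hlt
  push_neg at hlt
  -- densities positive
  have hpos : ∀ Y : Finset (Sym2 V), Y.Nonempty → 0 < edens Y := by
    intro Y hY
    obtain ⟨e, he⟩ := hY
    have hv : (vertsOf Y).Nonempty := by
      induction e using Sym2.ind with
      | _ a b =>
        refine ⟨a, ?_⟩
        simp only [vertsOf, Finset.mem_filter, Finset.mem_univ, true_and]
        exact ⟨s(a, b), he, by simp⟩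
    have h1 : (0 : ℝ) < (Y.card : ℝ) := by
      exact_mod_cast Finset.card_pos.mpr ⟨e, he⟩
    have h2 : (0 : ℝ) < ((vertsOf Y).card : ℝ) := by
      exact_mod_cast Finset.card_pos.mpr hv
    exact div_pos h1 h2
  have hDX := hpos X hXne
  have hDS := hpos Xstar hXstar_ne
  have hne : edens X ≠ edens Xstar := ne_of_gt hlt
  have hd := hdlb X hXE hXne Xstar hXstar hXstar_ne hne
  have hinv : 1 / edens Xstar - 1 / edens X > 0 := by
    have := one_div_lt_one_div_of_lt hDS hlt
    linarith
  have habs : |1 / edens X - 1 / edens Xstar| = 1 / edens Xstar - 1 / edens X := by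
    rw [abs_sub_comm, abs_of_pos hinv]
  rw [habs] at hd
  -- lambda positive
  have hSS : Smin ≤ Smax := by
    obtain ⟨Z, hZE, hZne, hZ⟩ := hSmax_att
    calc Smin ≤ esim s Z := hSmin_lb Z hZE hZne
    _ = Smax := hZ
  have hlam0 : 0 < lam := lt_of_le_of_lt (div_nonneg (by linarith) hdpos.le) hlam
  have hmax := hmaxXstar X hXE hXne
  have hkey : lam * (1 / edens Xstar - 1 / edens X) ≤ Smax - Smin := by
    have h1 := hSmax_ub Xstar hXstar hXstar_ne
    have h2 := hSmin_lb X hXE hXne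
    have e1 : lam / edens Xstar = lam * (1 / edens Xstar) := by ring
    have e2 : lam / edens X = lam * (1 / edens X) := by ring
    nlinarith [hmax]
  have hfin : lam * deltaD ≤ Smax - Smin :=
    le_trans (by nlinarith) hkey
  have : Smax - Smin < lam * deltaD := by
    rw [div_lt_iff₀ hdpos] at hlam; linarith
  linarith
end
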